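/- Let R be a based ring. Define a relation ~ on the basis B by: X ~ Y if and only if Y is contained in I(1)^n · X for some n ≥ 0. Then ~ is an equivalence relation on B; the resulting partition B = ⋃_{a∈A} B_a (with R_a the ℤ-span of B_a) is a faithful grading of R; and there is a group structure on the set A of equivalence classes, determined by the property that for all a, b ∈ A and all basic X ∈ B_a, Y ∈ B_b, every basic element contained in XY lies in B_{ab}. The identity element of A is the class of 1, whose span R_1 equals R_ad, and the inverse of the class of a basic X is the class of X*. (This group is called the universal grading group U(R).) -/

import Mathlib

/-- A *based ring* (fusion ring). -/
structure BasedRing (ι R : Type*) [Fintype ι] [DecidableEq ι] [Ring R] where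
  b : Module.Basis ι ℤ R
  unit : ι
  b_unit : b unit = 1
  star : ι → ι
  star_invol : ∀ i, star (star i) = i
  c_nonneg : ∀ i j k, 0 ≤ b.repr (b i * b j) k
  adj_right : ∀ i j k, b.repr (b i * b j) k = b.repr (b k * b (star j)) i
  adj_left : ∀ i j k, b.repr (b i * b j) k = b.repr (b (star i) * b k) j

namespace BasedRing

variable {ι R : Type*} [Fintype ι] [DecidableEq ι] [Ring R] (BR : BasedRing ι R)

/-- The element `I(1) = Σ_i X_i X_{i*}`. -/
noncomputable def I1 : R := ∑ i : ι, BR.b i * BR.b (BR.star i)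

/-- `x` (with nonnegative coordinates) *contains* the basic element `k`. -/
def contains (x : R) (k : ι) : Prop := 0 < BR.b.repr x k

/-- Index set of the adjoint subring `R_ad`: basic elements contained in some
power `I(1)^n`, `n ≥ 1`. -/
def adBasis : Set ι := {k | ∃ n : ℕ, 1 ≤ n ∧ BR.contains (BR.I1 ^ n) k}

/-- The relation `X ~ Y` iff `Y` is contained in `I(1)^n · X` for some `n ≥ 0`. -/
def rel (i j : ι) : Prop := ∃ n : ℕ, BR.contains (BR.I1 ^ n * BR.b i) j

end BasedRing

/-!
`I(1)` is central: the functional `x ↦ (I(1), x)` is the trace of left multiplication by `x`,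
and `(I(1) X_j, X_k)`, `(X_j I(1), X_k)` are its values at `X_k X_{j*}` and `X_{j*} X_k`. It is
also fixed by the anti-involution `X ↦ X*`, which makes `~` symmetric by Frobenius reciprocity.
If `X_k` and `X_k'` both occur in `X_i X_j`, then `X_k'` occurs in `X_i X_{i*} X_k`, a summand of
`I(1) X_k`; with centrality this shows that the class of any constituent of `X_i X_j` depends
only on the classes of `X_i` and `X_j`. This defines the group law; `1 ∈ X_{i*} X_i` gives
inverses.
-/

lemma sum_mul_pos_iff_of_nonneg {α : Type*} [Semiring α] [LinearOrder α] [IsStrictOrderedRing α]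
    {ι : Type*} [Fintype ι] {f g : ι → α} (hf : ∀ m, 0 ≤ f m) (hg : ∀ m, 0 ≤ g m) :
    0 < ∑ m, f m * g m ↔ ∃ m, 0 < f m ∧ 0 < g m := by
  rw [Finset.sum_pos_iff_of_nonneg fun m _ => mul_nonneg (hf m) (hg m)]
  simp only [Finset.mem_univ, true_and]
  refine exists_congr fun m => ⟨fun h => ?_, fun h => mul_pos h.1 h.2⟩
  exact ⟨pos_of_mul_pos_left h (hg m), pos_of_mul_pos_right h (hf m)⟩

namespace BasedRing

variable {ι R : Type*} [Fintype ι] [DecidableEq ι] [Ring R] (BR : BasedRing ι R)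

lemma repr_mul_left (x y : R) (k : ι) :
    BR.b.repr (x * y) k = ∑ m, BR.b.repr x m * BR.b.repr (BR.b m * y) k := by
  conv_lhs => rw [← BR.b.sum_repr x, Finset.sum_mul]
  simp only [smul_mul_assoc, map_sum, Finset.sum_apply', map_smul, Finsupp.smul_apply,
    smul_eq_mul]

lemma repr_mul_right (x y : R) (k : ι) :
    BR.b.repr (x * y) k = ∑ m, BR.b.repr y m * BR.b.repr (x * BR.b m) k := by
  conv_lhs => rw [← BR.b.sum_repr y, Finset.mul_sum]
  simp only [mul_smul_comm, map_sum, Finset.sum_apply', map_smul, Finsupp.smul_apply,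
    smul_eq_mul]

lemma repr_basis (i k : ι) : BR.b.repr (BR.b i) k = if i = k then 1 else 0 := by
  rw [Module.Basis.repr_self, Finsupp.single_apply]

lemma contains_basis_iff {i k : ι} : BR.contains (BR.b i) k ↔ i = k := by
  by_cases h : i = k <;> simp [contains, h]

lemma contains_basis_self (i : ι) : BR.contains (BR.b i) i :=
  BR.contains_basis_iff.mpr rfl

def Nonneg (x : R) : Prop := ∀ k, 0 ≤ BR.b.repr x k

lemma nonneg_basis (i : ι) : BR.Nonneg (BR.b i) := by
  intro k
  rw [BR.repr_basis]
  split_ifs <;> norm_num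

lemma nonneg_basis_mul {y : R} (hy : BR.Nonneg y) (m : ι) : BR.Nonneg (BR.b m * y) := by
  intro k
  rw [BR.repr_mul_right]
  exact Finset.sum_nonneg fun t _ => mul_nonneg (hy t) (BR.c_nonneg m t k)

lemma nonneg_mul {x y : R} (hx : BR.Nonneg x) (hy : BR.Nonneg y) : BR.Nonneg (x * y) := by
  intro k
  rw [BR.repr_mul_left]
  exact Finset.sum_nonneg fun m _ => mul_nonneg (hx m) (BR.nonneg_basis_mul hy m k)

lemma nonneg_one : BR.Nonneg (1 : R) := BR.b_unit ▸ BR.nonneg_basis BR.unit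

lemma nonneg_I1 : BR.Nonneg BR.I1 := by
  intro k
  simp only [I1, map_sum, Finset.sum_apply']
  exact Finset.sum_nonneg fun i _ => BR.nonneg_basis_mul (BR.nonneg_basis _) i k

lemma nonneg_I1_pow (n : ℕ) : BR.Nonneg (BR.I1 ^ n) := by
  induction n with
  | zero => simpa using BR.nonneg_one
  | succ n ih => rw [pow_succ]; exact BR.nonneg_mul ih BR.nonneg_I1

lemma contains_mul_iff_left {x y : R} (hx : BR.Nonneg x) (hy : BR.Nonneg y) {k : ι} :
    BR.contains (x * y) k ↔ ∃ m, BR.contains x m ∧ BR.contains (BR.b m * y) k := by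
  rw [contains, BR.repr_mul_left]
  exact sum_mul_pos_iff_of_nonneg hx fun m => BR.nonneg_basis_mul hy m k

lemma contains_mul_iff_right {x y : R} (hx : BR.Nonneg x) (hy : BR.Nonneg y) {k : ι} :
    BR.contains (x * y) k ↔ ∃ m, BR.contains y m ∧ BR.contains (x * BR.b m) k := by
  rw [contains, BR.repr_mul_right]
  exact sum_mul_pos_iff_of_nonneg hy fun m => BR.nonneg_mul hx (BR.nonneg_basis m) k

lemma star_involutive : Function.Involutive BR.star := BR.star_invol

lemma sum_comp_star {M : Type*} [AddCommMonoid M] (f : ι → M) :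
    ∑ i, f (BR.star i) = ∑ i, f i :=
  Equiv.sum_comp (BR.star_involutive.toPerm _) f

lemma repr_mul_star_star (i j k : ι) :
    BR.b.repr (BR.b i * BR.b j) k
      = BR.b.repr (BR.b (BR.star j) * BR.b (BR.star i)) (BR.star k) := by
  rw [BR.adj_right (BR.star j) (BR.star i) (BR.star k), BR.star_invol,
    BR.adj_left (BR.star k) i (BR.star j), BR.star_invol, ← BR.adj_right i j k]

lemma star_unit : BR.star BR.unit = BR.unit := by
  have h := BR.adj_left BR.unit BR.unit BR.unit
  rw [BR.b_unit, one_mul, mul_one, ← BR.b_unit, BR.repr_basis, BR.repr_basis] at h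
  simpa using h

noncomputable def starₗ : R →ₗ[ℤ] R := BR.b.constr ℤ fun i => BR.b (BR.star i)

lemma starₗ_basis (i : ι) : BR.starₗ (BR.b i) = BR.b (BR.star i) := by
  simp [starₗ]

lemma repr_starₗ (x : R) (k : ι) : BR.b.repr (BR.starₗ x) k = BR.b.repr x (BR.star k) := by
  conv_lhs => rw [← BR.b.sum_repr x]
  simp only [map_sum, map_smul, BR.starₗ_basis, Finset.sum_apply', Finsupp.smul_apply,
    smul_eq_mul, BR.repr_basis]
  rw [← BR.sum_comp_star]
  simp [BR.star_invol]

lemma starₗ_mul (x y : R) : BR.starₗ (x * y) = BR.starₗ y * BR.starₗ x := by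
  have h : (LinearMap.mul ℤ R).compr₂ BR.starₗ
      = (LinearMap.mul ℤ R).flip.compl₁₂ BR.starₗ BR.starₗ := by
    refine LinearMap.ext_basis BR.b BR.b fun i j => BR.b.ext_elem fun k => ?_
    simp only [LinearMap.compr₂_apply, LinearMap.compl₁₂_apply, LinearMap.flip_apply,
      LinearMap.mul_apply', BR.starₗ_basis, BR.repr_starₗ]
    rw [BR.repr_mul_star_star, BR.star_invol]
  exact LinearMap.congr_fun₂ h x y

lemma starₗ_one : BR.starₗ (1 : R) = 1 := by
  rw [← BR.b_unit, BR.starₗ_basis, BR.star_unit]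

lemma starₗ_I1 : BR.starₗ BR.I1 = BR.I1 := by
  simp only [I1, map_sum, BR.starₗ_mul, BR.starₗ_basis, BR.star_invol]

lemma starₗ_I1_pow (n : ℕ) : BR.starₗ (BR.I1 ^ n) = BR.I1 ^ n := by
  induction n with
  | zero => rw [pow_zero, BR.starₗ_one]
  | succ n ih => rw [pow_succ, BR.starₗ_mul, ih, BR.starₗ_I1, ← pow_succ', pow_succ]

lemma repr_I1 (m : ι) : BR.b.repr BR.I1 m = ∑ i, BR.b.repr (BR.b m * BR.b i) i := by
  simp only [I1, map_sum, Finset.sum_apply', BR.adj_right m]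

lemma sum_repr_I1_mul_comm (x y : R) :
    ∑ m, BR.b.repr BR.I1 m * BR.b.repr (x * y) m
      = ∑ m, BR.b.repr BR.I1 m * BR.b.repr (y * x) m := by
  have := Module.Free.of_basis BR.b
  have := Module.Finite.of_basis BR.b
  have trace_mulLeft (z : R) : LinearMap.trace ℤ R (LinearMap.mulLeft ℤ z)
      = ∑ m, BR.b.repr BR.I1 m * BR.b.repr z m := by
    rw [LinearMap.trace_eq_matrix_trace ℤ BR.b, Matrix.trace]
    simp only [Matrix.diag, LinearMap.toMatrix_apply, LinearMap.mulLeft_apply]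
    simp_rw [BR.repr_mul_left z, BR.repr_I1, Finset.sum_mul]
    rw [Finset.sum_comm]
    exact Finset.sum_congr rfl fun m _ => Finset.sum_congr rfl fun i _ => mul_comm _ _
  rw [← trace_mulLeft, ← trace_mulLeft, LinearMap.mulLeft_mul, LinearMap.mulLeft_mul]
  exact LinearMap.trace_comp_comm' _ _

lemma commute_I1_basis (j : ι) : Commute BR.I1 (BR.b j) := by
  refine BR.b.ext_elem fun k => ?_
  have hl : BR.b.repr (BR.I1 * BR.b j) k
      = ∑ m, BR.b.repr BR.I1 m * BR.b.repr (BR.b k * BR.b (BR.star j)) m := by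
    rw [BR.repr_mul_left]
    simp only [BR.adj_right _ j k]
  have hr : BR.b.repr (BR.b j * BR.I1) k
      = ∑ m, BR.b.repr BR.I1 m * BR.b.repr (BR.b (BR.star j) * BR.b k) m := by
    rw [BR.repr_mul_right]
    simp only [BR.adj_left j _ k]
  rw [hl, hr, BR.sum_repr_I1_mul_comm]

lemma commute_I1 (x : R) : Commute BR.I1 x := by
  rw [← BR.b.sum_repr x]
  exact Commute.sum_right _ _ _ fun j _ => (BR.commute_I1_basis j).smul_right _

lemma repr_mul_basis_comm (x : R) (i j : ι) :
    BR.b.repr (x * BR.b i) j = BR.b.repr (BR.starₗ x * BR.b j) i := by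
  rw [BR.repr_mul_left, BR.repr_mul_left, ← BR.sum_comp_star]
  simp only [BR.repr_starₗ, BR.adj_left _ i j, BR.star_invol]

lemma rel_refl (i : ι) : BR.rel i i :=
  ⟨0, by simpa using BR.contains_basis_self i⟩

lemma rel_symm {i j : ι} : BR.rel i j → BR.rel j i := fun ⟨n, hn⟩ =>
  ⟨n, by rwa [contains, BR.repr_mul_basis_comm, BR.starₗ_I1_pow]⟩

lemma rel_trans {i j k : ι} (hij : BR.rel i j) (hjk : BR.rel j k) : BR.rel i k := by
  obtain ⟨n, hn⟩ := hij
  obtain ⟨m, hm⟩ := hjk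
  refine ⟨m + n, ?_⟩
  rw [pow_add, mul_assoc, BR.contains_mul_iff_right (BR.nonneg_I1_pow m)
    (BR.nonneg_mul (BR.nonneg_I1_pow n) (BR.nonneg_basis i))]
  exact ⟨j, hn, hm⟩

lemma rel_equivalence : Equivalence BR.rel :=
  ⟨BR.rel_refl, BR.rel_symm, BR.rel_trans⟩

lemma rel_star {i j : ι} : BR.rel i j → BR.rel (BR.star i) (BR.star j) := fun ⟨n, hn⟩ =>
  ⟨n, by rwa [contains, ← BR.repr_starₗ, BR.starₗ_mul, BR.starₗ_I1_pow, BR.starₗ_basis,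
    BR.star_invol, ← ((BR.commute_I1 _).pow_left n).eq]⟩

lemma contains_basis_mul_basis_star (i : ι) :
    BR.contains (BR.b i * BR.b (BR.star i)) BR.unit := by
  rw [contains, BR.adj_right, BR.star_invol, BR.b_unit, one_mul]
  exact BR.contains_basis_self i

lemma contains_basis_star_mul_basis (i : ι) :
    BR.contains (BR.b (BR.star i) * BR.b i) BR.unit := by
  simpa only [BR.star_invol] using BR.contains_basis_mul_basis_star (BR.star i)

lemma contains_basis_unit_mul (j : ι) : BR.contains (BR.b BR.unit * BR.b j) j := by
  rw [BR.b_unit, one_mul]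
  exact BR.contains_basis_self j

/-- `X_{i*} (X_i X_j)` contains `X_j`, so `X_i X_j ≠ 0`. -/
lemma exists_contains_basis_mul (i j : ι) : ∃ k, BR.contains (BR.b i * BR.b j) k := by
  have hbb := BR.nonneg_mul (BR.nonneg_basis i) (BR.nonneg_basis j)
  have h : BR.contains (BR.b (BR.star i) * BR.b i * BR.b j) j :=
    (BR.contains_mul_iff_left (BR.nonneg_mul (BR.nonneg_basis _) (BR.nonneg_basis i))
      (BR.nonneg_basis j)).mpr ⟨BR.unit, BR.contains_basis_star_mul_basis i,
        BR.contains_basis_unit_mul j⟩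
  rw [mul_assoc, BR.contains_mul_iff_right (BR.nonneg_basis _) hbb] at h
  obtain ⟨k, hk, -⟩ := h
  exact ⟨k, hk⟩

lemma contains_I1_mul {x : R} (hx : BR.Nonneg x) {i k : ι}
    (h : BR.contains (BR.b i * BR.b (BR.star i) * x) k) : BR.contains (BR.I1 * x) k := by
  have hsum : BR.b.repr (BR.I1 * x) k = ∑ t, BR.b.repr (BR.b t * BR.b (BR.star t) * x) k := by
    simp only [I1, Finset.sum_mul, map_sum, Finset.sum_apply']
  rw [contains, hsum]
  exact h.trans_le <| Finset.single_le_sum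
    (fun t _ => BR.nonneg_mul (BR.nonneg_mul (BR.nonneg_basis _) (BR.nonneg_basis _)) hx k)
    (Finset.mem_univ i)

lemma rel_of_contains_of_contains {i j k k' : ι} (h : BR.contains (BR.b i * BR.b j) k)
    (h' : BR.contains (BR.b i * BR.b j) k') : BR.rel k k' := by
  refine ⟨1, ?_⟩
  have hj : BR.contains (BR.b (BR.star i) * BR.b k) j := by rwa [contains, ← BR.adj_left]
  rw [pow_one]
  refine BR.contains_I1_mul (BR.nonneg_basis k) (i := i) ?_
  rw [mul_assoc, BR.contains_mul_iff_right (BR.nonneg_basis i)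
    (BR.nonneg_mul (BR.nonneg_basis _) (BR.nonneg_basis k))]
  exact ⟨j, hj, h'⟩

lemma rel_of_contains_mul_of_rel {i i' j j' k k' : ι} (hi : BR.rel i i') (hj : BR.rel j j')
    (h : BR.contains (BR.b i * BR.b j) k) (h' : BR.contains (BR.b i' * BR.b j') k') :
    BR.rel k k' := by
  obtain ⟨n, hn⟩ := hi
  obtain ⟨p, hp⟩ := hj
  have hprod : BR.contains ((BR.I1 ^ n * BR.b i) * (BR.I1 ^ p * BR.b j)) k' := by
    have hp' := BR.nonneg_mul (BR.nonneg_I1_pow p) (BR.nonneg_basis j)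
    rw [BR.contains_mul_iff_left (BR.nonneg_mul (BR.nonneg_I1_pow n) (BR.nonneg_basis i)) hp']
    refine ⟨i', hn, ?_⟩
    rw [BR.contains_mul_iff_right (BR.nonneg_basis i') hp']
    exact ⟨j', hp, h'⟩
  have hcomm : (BR.I1 ^ n * BR.b i) * (BR.I1 ^ p * BR.b j)
      = BR.I1 ^ (n + p) * (BR.b i * BR.b j) := by
    rw [pow_add, mul_assoc, ← mul_assoc (BR.b i), ← ((BR.commute_I1 _).pow_left p).eq]
    simp only [mul_assoc]
  rw [hcomm, BR.contains_mul_iff_right (BR.nonneg_I1_pow _)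
    (BR.nonneg_mul (BR.nonneg_basis i) (BR.nonneg_basis j))] at hprod
  obtain ⟨m, hm, hmk'⟩ := hprod
  exact BR.rel_trans (BR.rel_of_contains_of_contains h hm) ⟨n + p, hmk'⟩

lemma rel_unit_iff (i : ι) : BR.rel BR.unit i ↔ i ∈ BR.adBasis := by
  simp only [rel, adBasis, Set.mem_ofPred_eq, BR.b_unit, mul_one]
  constructor
  · rintro ⟨_ | n, hn⟩
    · obtain rfl : BR.unit = i := by simpa [← BR.b_unit, BR.contains_basis_iff] using hn
      refine ⟨1, le_rfl, ?_⟩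
      simpa using BR.contains_I1_mul BR.nonneg_one (i := BR.unit)
        (by simpa using BR.contains_basis_mul_basis_star BR.unit)
    · exact ⟨n + 1, by omega, hn⟩
  · rintro ⟨n, -, hn⟩
    exact ⟨n, hn⟩

def relSetoid : Setoid ι := ⟨BR.rel, BR.rel_equivalence⟩

def UniversalGradingGroup : Type _ := Quotient BR.relSetoid

def grade (i : ι) : BR.UniversalGradingGroup := Quotient.mk BR.relSetoid i

lemma grade_eq_grade_iff {i j : ι} : BR.grade i = BR.grade j ↔ BR.rel i j := Quotient.eq

lemma grade_surjective : Function.Surjective BR.grade := Quotient.mk_surjective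

noncomputable def constituent (i j : ι) : ι := (BR.exists_contains_basis_mul i j).choose

lemma contains_constituent (i j : ι) : BR.contains (BR.b i * BR.b j) (BR.constituent i j) :=
  (BR.exists_contains_basis_mul i j).choose_spec

noncomputable instance : Mul BR.UniversalGradingGroup :=
  ⟨Quotient.map₂ BR.constituent fun _ _ hi _ _ hj =>
    BR.rel_of_contains_mul_of_rel hi hj (BR.contains_constituent _ _)
      (BR.contains_constituent _ _)⟩

instance : One BR.UniversalGradingGroup := ⟨BR.grade BR.unit⟩

instance : Inv BR.UniversalGradingGroup := ⟨Quotient.map BR.star fun _ _ => BR.rel_star⟩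

lemma grade_of_contains {i j k : ι} (h : BR.contains (BR.b i * BR.b j) k) :
    BR.grade k = BR.grade i * BR.grade j :=
  BR.grade_eq_grade_iff.mpr (BR.rel_of_contains_of_contains h (BR.contains_constituent i j))

lemma grade_unit : BR.grade BR.unit = 1 := rfl

lemma grade_star (i : ι) : BR.grade (BR.star i) = (BR.grade i)⁻¹ := rfl

noncomputable instance : Group BR.UniversalGradingGroup :=
  Group.ofLeftAxioms
    (fun a b c => by
      induction a using Quotient.ind with | _ i =>
      induction b using Quotient.ind with | _ j =>
      induction c using Quotient.ind with | _ k =>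
      have hij := BR.nonneg_mul (BR.nonneg_basis i) (BR.nonneg_basis j)
      have hjk := BR.nonneg_mul (BR.nonneg_basis j) (BR.nonneg_basis k)
      obtain ⟨l, hl⟩ := BR.exists_contains_basis_mul (BR.constituent i j) k
      have hijk : BR.contains (BR.b i * BR.b j * BR.b k) l :=
        (BR.contains_mul_iff_left hij (BR.nonneg_basis k)).mpr
          ⟨_, BR.contains_constituent i j, hl⟩
      rw [mul_assoc, BR.contains_mul_iff_right (BR.nonneg_basis i) hjk] at hijk
      obtain ⟨m, hm, hml⟩ := hijk
      change BR.grade i * BR.grade j * BR.grade k = BR.grade i * (BR.grade j * BR.grade k)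
      rw [← BR.grade_of_contains (BR.contains_constituent i j), ← BR.grade_of_contains hl,
        ← BR.grade_of_contains hm, ← BR.grade_of_contains hml])
    (fun a => by
      induction a using Quotient.ind with | _ i =>
      exact (BR.grade_of_contains (BR.contains_basis_unit_mul i)).symm)
    (fun a => by
      induction a using Quotient.ind with | _ i =>
      exact (BR.grade_of_contains (BR.contains_basis_star_mul_basis i)).symm)

lemma grade_eq_one_iff (i : ι) : BR.grade i = 1 ↔ i ∈ BR.adBasis := by
  rw [← BR.grade_unit, eq_comm, BR.grade_eq_grade_iff, BR.rel_unit_iff]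

end BasedRing

/-- The relation `X ~ Y` iff `Y` is contained in `I(1)^n · X` for
some `n ≥ 0` is an equivalence relation on the basis; the resulting partition
is a faithful grading of `R` by a group structure on the set of equivalence
classes (realized here by a surjective map `π : ι → G` onto a group `G` whose
fibers are the equivalence classes), determined by: every basic constituent of
`X_i X_j` has degree `π i * π j`. The identity of the group is the class of
`1`, which consists exactly of the basic elements of `R_ad`, and the inverse of
the class of a basic element is the class of its `*`-conjugate. This is the
universal grading of `R` by the universal grading group `U(R)`. -/
theorem universal_grading_group {ι R : Type*} [Fintype ι] [DecidableEq ι]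
    [Ring R] (BR : BasedRing ι R) :
    Equivalence BR.rel ∧
    ∃ (G : Type) (_ : Group G) (π : ι → G),
      Function.Surjective π ∧
      (∀ i j, BR.rel i j ↔ π i = π j) ∧
      (∀ i j k, BR.contains (BR.b i * BR.b j) k → π k = π i * π j) ∧
      π BR.unit = 1 ∧
      (∀ i, π i = 1 ↔ i ∈ BR.adBasis) ∧
      (∀ i, π (BR.star i) = (π i)⁻¹) := by
  have : Finite BR.UniversalGradingGroup := Quotient.finite _
  let e : BR.UniversalGradingGroup ≃* Shrink.{0} BR.UniversalGradingGroup := Shrink.mulEquiv.symm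
  exact ⟨BR.rel_equivalence, _, inferInstance, fun i => e (BR.grade i),
    e.surjective.comp BR.grade_surjective,
    fun i j => BR.grade_eq_grade_iff.symm.trans e.apply_eq_iff_eq.symm,
    fun i j k h => (congrArg e (BR.grade_of_contains h)).trans (map_mul e _ _),
    (congrArg e BR.grade_unit).trans (map_one e),
    fun i => (map_eq_one_iff e e.injective).trans (BR.grade_eq_one_iff i),
    fun i => (congrArg e (BR.grade_star i)).trans (map_inv e _)⟩
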